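/- Let A be an R-arboretum over X with an orientation A^{1+}, and suppose there exists a partial section d : A → A^{1+}, defined on a Borel set A ⊆ X, whose image d(A) is a fundamental domain of the induced relation R_{A^{1+}}. Assume moreover that the R_{A⁰}-saturations of o(d(A)) and of t(d(A)) form a Borel partition of the vertex space A⁰. Then the restriction R|_A is the free product of its subrelations Stab_R(o∘d) and Stab_R(t∘d). -/

import Mathlib

open Set

universe u

section Relations

variable {X : Type u} [MeasurableSpace X]

/-- A countable Borel equivalence relation on `X` : a Borel subset of `X × X` which is an
equivalence relation all of whose classes are countable. -/
def IsCBER (R : Set (X × X)) : Prop :=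
  MeasurableSet R ∧ (∀ x, (x, x) ∈ R) ∧ (∀ ⦃x y⦄, (x, y) ∈ R → (y, x) ∈ R) ∧
    (∀ ⦃x y z⦄, (x, y) ∈ R → (y, z) ∈ R → (x, z) ∈ R) ∧
    ∀ x, {y | (x, y) ∈ R}.Countable

/-- A subrelation of `R` defined on the Borel set `A` : a Borel equivalence relation on `A`
contained in `R`. -/
def IsSubrelOn (R S : Set (X × X)) (A : Set X) : Prop :=
  MeasurableSet A ∧ MeasurableSet S ∧ S ⊆ R ∧ S ⊆ A ×ˢ A ∧
    (∀ x ∈ A, (x, x) ∈ S) ∧ (∀ ⦃x y⦄, (x, y) ∈ S → (y, x) ∈ S) ∧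
    ∀ ⦃x y z⦄, (x, y) ∈ S → (y, z) ∈ S → (x, z) ∈ S

/-- A subrelation of `R`, defined on some Borel subset of `X`. -/
def IsSubrel (R S : Set (X × X)) : Prop :=
  ∃ A : Set X, IsSubrelOn R S A

/-- Restriction `R|_A = R ∩ (A × A)`. -/
def Restrict (R : Set (X × X)) (A : Set X) : Set (X × X) := R ∩ A ×ˢ A

/-- The `R`-saturation of a set `A`. -/
def Saturation (R : Set (X × X)) (A : Set X) : Set X := {x | ∃ a ∈ A, (a, x) ∈ R}

/-- A Borel set meeting every class of `R` : a complete domain. -/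
def IsCompleteDomain (R : Set (X × X)) (D : Set X) : Prop :=
  MeasurableSet D ∧ (∀ d ∈ D, (d, d) ∈ R) ∧ ∀ x, (x, x) ∈ R → ∃ d ∈ D, (x, d) ∈ R

/-- A Borel set meeting every class of `R` in exactly one point : a fundamental domain. -/
def IsFundamentalDomain (R : Set (X × X)) (D : Set X) : Prop :=
  MeasurableSet D ∧ (∀ d ∈ D, (d, d) ∈ R) ∧ ∀ x, (x, x) ∈ R → ∃! d, d ∈ D ∧ (x, d) ∈ R

/-- A Borel equivalence relation is smooth if it admits a fundamental domain. -/
def IsSmoothRel (R : Set (X × X)) : Prop := ∃ D, IsFundamentalDomain R D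

/-- A graphing of `R` : a symmetric irreflexive Borel subset of `R` generating `R`. -/
def IsGraphing (R G : Set (X × X)) : Prop :=
  MeasurableSet G ∧ G ⊆ R ∧ (∀ ⦃x y⦄, (x, y) ∈ G → (y, x) ∈ G) ∧
    (∀ x, (x, x) ∉ G) ∧
    ∀ p ∈ R, Relation.ReflTransGen (fun a b => (a, b) ∈ G) p.1 p.2

/-- The (simple) graph given by a symmetric irreflexive set of pairs has a cycle : an injective
closed path of length at least 3. -/
def HasCycle (G : Set (X × X)) : Prop :=
  ∃ (n : ℕ) (c : ℕ → X), 3 ≤ n ∧ (∀ k < n, (c k, c ((k + 1) % n)) ∈ G) ∧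
    ∀ k < n, ∀ l < n, c k = c l → k = l

/-- A treeing of `R` : an acyclic graphing. -/
def IsTreeing (R G : Set (X × X)) : Prop := IsGraphing R G ∧ ¬ HasCycle G

/-- `R` is treeable if it admits a treeing. -/
def IsTreeable (R : Set (X × X)) : Prop := ∃ G, IsTreeing R G

/-- `φ` is an element of the full pseudogroup `[[R]]` with (Borel) domain `A` :
an injective Borel map on `A` whose graph is contained in `R` (its image `φ '' A` is then
automatically Borel and `φ` is a Borel isomorphism of `A` onto `φ '' A`). -/
def MemPseudoGroup (R : Set (X × X)) (A : Set X) (φ : X → X) : Prop :=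
  MeasurableSet A ∧ Measurable (A.restrict φ) ∧ Set.InjOn φ A ∧
    ∀ x ∈ A, (x, φ x) ∈ R

/-- Conjugation `φ⁻¹ S φ` of a subrelation `S` (defined on `φ '' A`) by `φ : A → φ '' A`. -/
def Conj (S : Set (X × X)) (A : Set X) (φ : X → X) : Set (X × X) :=
  {p | p.1 ∈ A ∧ p.2 ∈ A ∧ (φ p.1, φ p.2) ∈ S}

/-- Two subrelations of `R` are stably conjugate if they admit complete domains on which their
restrictions are conjugate by an element of the full pseudogroup of `R`. -/
def StablyConjugate (R S S' : Set (X × X)) : Prop :=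
  ∃ (D D' : Set X) (φ : X → X),
    IsCompleteDomain S D ∧ IsCompleteDomain S' D' ∧
    MemPseudoGroup R D' φ ∧ φ '' D' = D ∧
    Restrict S' D' = Conj (Restrict S D) D' φ

/-- `R` is the free product of the countable family `Rf` : the `Rf i` generate `R` and every
cyclic word with consecutive pairs in distinct factors contains a trivial pair.
(Here a word with `m` consecutive pairs is given by its `m + 1` points `x 0, …, x m`.) -/
def IsCtblFreeProduct {ι : Type*} (R : Set (X × X)) (Rf : ι → Set (X × X)) : Prop :=
  (∀ i, Rf i ⊆ R) ∧
    (∀ p ∈ R, Relation.EqvGen (fun a b => ∃ i, (a, b) ∈ Rf i) p.1 p.2) ∧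
    ∀ (m : ℕ) (x : ℕ → X) (idx : ℕ → ι),
      1 ≤ m → x m = x 0 →
      (∀ k < m, (x k, x (k + 1)) ∈ Rf (idx k)) →
      (∀ k, k + 1 < m → idx k ≠ idx (k + 1)) →
      ∃ k < m, x k = x (k + 1)

/-- A reduced word with respect to two subrelations `R1`, `R2` : a tuple of points
`x 0, …, x m` (`m ≥ 1` consecutive pairs) such that every consecutive pair is `R1`- or
`R2`-equivalent, no two successive pairs are `Rj`-equivalent for the same `j`, and
`x 0 ≠ x 1` when there is a single pair. -/
def Reduced2 (R1 R2 : Set (X × X)) (m : ℕ) (x : ℕ → X) : Prop :=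
  1 ≤ m ∧
  (∀ k < m, (x k, x (k + 1)) ∈ R1 ∨ (x k, x (k + 1)) ∈ R2) ∧
  (∀ k, k + 1 < m → ¬((x k, x (k + 1)) ∈ R1 ∧ (x (k + 1), x (k + 2)) ∈ R1)) ∧
  (∀ k, k + 1 < m → ¬((x k, x (k + 1)) ∈ R2 ∧ (x (k + 1), x (k + 2)) ∈ R2)) ∧
  (m = 1 → x 0 ≠ x 1)

/-- `R` is the free product of two subrelations `R1 ⋆ R2` : `R` is the smallest equivalence
relation containing `R1` and `R2` and the endpoints of every reduced word are distinct. -/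
def IsFreeProduct2 (R R1 R2 : Set (X × X)) : Prop :=
  R1 ⊆ R ∧ R2 ⊆ R ∧
  (∀ p ∈ R, Relation.EqvGen (fun a b => (a, b) ∈ R1 ∨ (a, b) ∈ R2) p.1 p.2) ∧
  ∀ m x, Reduced2 R1 R2 m x → x m ≠ x 0

/-- A reduced word with respect to `R1`, `R2` and a common subrelation `R3` : moreover no
consecutive pair is `R3`-equivalent as soon as there are at least two pairs. -/
def Reduced3 (R1 R2 R3 : Set (X × X)) (m : ℕ) (x : ℕ → X) : Prop :=
  Reduced2 R1 R2 m x ∧ (1 < m → ∀ k < m, (x k, x (k + 1)) ∉ R3)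

/-- `R` is the amalgamated product `R1 ⋆_{R3} R2` of `R1` and `R2` over the common
subrelation `R3`. -/
def IsAmalgam (R R1 R2 R3 : Set (X × X)) : Prop :=
  R1 ⊆ R ∧ R2 ⊆ R ∧ R3 ⊆ R1 ∧ R3 ⊆ R2 ∧
  (∀ p ∈ R, Relation.EqvGen (fun a b => (a, b) ∈ R1 ∨ (a, b) ∈ R2) p.1 p.2) ∧
  ∀ m x, Reduced3 R1 R2 R3 m x → x m ≠ x 0

end Relations

/-- An `R`-fibered space over `X` : a standard Borel space `F` with a Borel,
countable-to-one surjection `π` onto `X`, equipped with a Borel action of `R`. -/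
structure RFibSp (X : Type u) [MeasurableSpace X] (R : Set (X × X)) where
  F : Type u
  [mF : MeasurableSpace F]
  [sbF : StandardBorelSpace F]
  π : F → X
  act : X → X → F → F
  measurable_π : Measurable π
  surjective_π : Function.Surjective π
  countable_fibers : ∀ x : X, {t : F | π t = x}.Countable
  measurable_act :
    Measurable fun q : {q : (X × X) × F // q.1 ∈ R ∧ π q.2 = q.1.2} =>
      act q.1.1.1 q.1.1.2 q.1.2
  act_proj : ∀ ⦃x y : X⦄ (t : F), (x, y) ∈ R → π t = y → π (act x y t) = x
  act_id : ∀ (z : X) (t : F), π t = z → act z z t = t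
  act_comp : ∀ ⦃x y z : X⦄ (t : F), (x, y) ∈ R → (y, z) ∈ R → π t = z →
      act x y (act y z t) = act x z t

attribute [instance] RFibSp.mF RFibSp.sbF

namespace RFibSp

variable {X : Type u} [MeasurableSpace X] {R : Set (X × X)}

/-- The induced equivalence relation `R_F` on `F` : `t` and `t'` are related iff
`(π t', π t) · t = t'`. -/
def rel (E : RFibSp X R) : Set (E.F × E.F) :=
  {p | (E.π p.2, E.π p.1) ∈ R ∧ E.act (E.π p.2) (E.π p.1) p.1 = p.2}

/-- The `R_F`-saturation of a subset of `F`. -/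
def sat (E : RFibSp X R) (B : Set E.F) : Set E.F :=
  {t | ∃ b ∈ B, (b, t) ∈ E.rel}

/-- A partial section of `E` defined on the Borel set `A`. -/
def IsPartialSection (E : RFibSp X R) (A : Set X) (s : X → E.F) : Prop :=
  MeasurableSet A ∧ Measurable (A.restrict s) ∧ ∀ x ∈ A, E.π (s x) = x

/-- The stabilizer of a partial section : `x ∼ y` iff `(y, x) · s x = s y`. -/
def stab (E : RFibSp X R) (A : Set X) (s : X → E.F) : Set (X × X) :=
  {p | p.1 ∈ A ∧ p.2 ∈ A ∧ (p.2, p.1) ∈ R ∧ E.act p.2 p.1 (s p.1) = s p.2}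

/-- A partial section is saturating if the `R_F`-saturation of its image is all of `F`. -/
def IsSaturating (E : RFibSp X R) (A : Set X) (s : X → E.F) : Prop :=
  ∀ t : E.F, ∃ x ∈ A, (s x, t) ∈ E.rel

/-- Quasi-free action : the stabilizer of every partial section is smooth. -/
def IsQuasiFree (E : RFibSp X R) : Prop :=
  ∀ (A : Set X) (s : X → E.F), E.IsPartialSection A s → IsSmoothRel (E.stab A s)

/-- A morphism of `R`-fibered spaces. -/
def IsMorphism (E E' : RFibSp X R) (f : E.F → E'.F) : Prop :=
  Measurable f ∧ (∀ t, E'.π (f t) = E.π t) ∧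
    ∀ ⦃x y : X⦄ (t : E.F), (x, y) ∈ R → E.π t = y →
      f (E.act x y t) = E'.act x y (f t)

end RFibSp

/-- An `R`-field of Borel graphs over `X` : vertex and edge `R`-fibered spaces together with
origin, terminal and edge-reversal morphisms. -/
structure RGraphField (X : Type u) [MeasurableSpace X] (R : Set (X × X)) where
  V : RFibSp X R
  Edg : RFibSp X R
  o : Edg.F → V.F
  t : Edg.F → V.F
  bar : Edg.F → Edg.F
  o_mor : RFibSp.IsMorphism Edg V o
  t_mor : RFibSp.IsMorphism Edg V t
  bar_mor : RFibSp.IsMorphism Edg Edg bar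
  bar_bar : ∀ a, bar (bar a) = a
  bar_ne : ∀ a, bar a ≠ a
  o_bar : ∀ a, o (bar a) = t a

namespace RGraphField

variable {X : Type u} [MeasurableSpace X] {R : Set (X × X)}

/-- Adjacency in the fiber over `x`. -/
def Adj (G : RGraphField X R) (x : X) (v w : G.V.F) : Prop :=
  ∃ e : G.Edg.F, G.Edg.π e = x ∧ G.o e = v ∧ G.t e = w

/-- The fiber over `x` is connected. -/
def FiberConnected (G : RGraphField X R) (x : X) : Prop :=
  ∀ v w : G.V.F, G.V.π v = x → G.V.π w = x → Relation.ReflTransGen (G.Adj x) v w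

/-- The fiber over `x` contains a circuit : a reduced closed edge path of positive length. -/
def FiberHasCircuit (G : RGraphField X R) (x : X) : Prop :=
  ∃ (n : ℕ) (c : ℕ → G.Edg.F), 0 < n ∧ (∀ k < n, G.Edg.π (c k) = x) ∧
    (∀ k < n, G.t (c k) = G.o (c ((k + 1) % n))) ∧
    ∀ k < n, c ((k + 1) % n) ≠ G.bar (c k)

/-- An `R`-arboretum : every fiber is a (nonempty) tree. -/
def IsArboretum (G : RGraphField X R) : Prop :=
  ∀ x : X, G.FiberConnected x ∧ ¬ G.FiberHasCircuit x

/-- An orientation of the edge space : an `R`-invariant Borel set of edges containing exactly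
one edge of each pair `{a, ā}`. -/
def IsOrientation (G : RGraphField X R) (P : Set G.Edg.F) : Prop :=
  MeasurableSet P ∧ (∀ a : G.Edg.F, a ∈ P ↔ G.bar a ∉ P) ∧
    ∀ ⦃x y : X⦄ (a : G.Edg.F), (x, y) ∈ R → G.Edg.π a = y → a ∈ P →
      G.Edg.act x y a ∈ P

end RGraphField

/-!
Over a point `x`, the translates `(x, z) · s z` with `z ∈ A` in the class of `x` are the
positively oriented edges of the tree `A_x`, each exactly once. Two of them share their origin
iff their indices are `Stab(o ∘ s)`-related, their terminal vertex iff the indices are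
`Stab(t ∘ s)`-related, and the origin of one is never the terminal vertex of another, because the
two saturations are disjoint. Hence following a path in the connected tree `A_x` shows that the
two stabilizers generate `R|_A`, while a reduced word returning to its start would give a
closed edge path in `A_x` without backtracking, which a tree does not have.
-/

namespace IsCBER

variable {X : Type u} [MeasurableSpace X] {R : Set (X × X)}

theorem refl (hR : IsCBER R) (x : X) : (x, x) ∈ R := hR.2.1 x

theorem symm (hR : IsCBER R) {x y : X} (h : (x, y) ∈ R) : (y, x) ∈ R := hR.2.2.1 h

theorem trans (hR : IsCBER R) {x y z : X} (h : (x, y) ∈ R) (h' : (y, z) ∈ R) : (x, z) ∈ R :=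
  hR.2.2.2.1 h h'

end IsCBER

theorem Reduced2.ne_succ {X : Type u} {R1 R2 : Set (X × X)} {m : ℕ} {x : ℕ → X}
    (h : Reduced2 R1 R2 m x)
    (hdiag : ∀ a b, (a, b) ∈ R1 ∨ (a, b) ∈ R2 → (a, a) ∈ R1 ∧ (a, a) ∈ R2)
    {k : ℕ} (hk : k < m) : x k ≠ x (k + 1) := by
  obtain ⟨-, hpairs, h1, h2, hone⟩ := h
  intro heq
  obtain ⟨hd1, hd2⟩ : (x k, x (k + 1)) ∈ R1 ∧ (x k, x (k + 1)) ∈ R2 := by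
    rw [← heq]; exact hdiag _ _ (hpairs k hk)
  rcases Nat.lt_or_ge (k + 1) m with hk1 | hk1
  · rcases hpairs (k + 1) hk1 with h' | h'
    · exact h1 k hk1 ⟨hd1, h'⟩
    · exact h2 k hk1 ⟨hd2, h'⟩
  · cases k with
    | zero => exact hone (by omega) heq
    | succ j =>
      rcases hpairs j (by omega) with h' | h'
      · exact h1 j (by omega) ⟨h', hd1⟩
      · exact h2 j (by omega) ⟨h', hd2⟩

namespace RFibSp

variable {X : Type u} [MeasurableSpace X] {R : Set (X × X)} (E : RFibSp X R)
  {A : Set X} {σ : X → E.F} {x z z' : X}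

theorem mem_rel_iff {t f : E.F} (ht : E.π t = z) :
    (t, f) ∈ E.rel ↔ (E.π f, z) ∈ R ∧ E.act (E.π f) z t = f := by
  rw [← ht]; rfl

theorem act_mem_rel {t : E.F} (ht : E.π t = z) (h : (x, z) ∈ R) :
    (t, E.act x z t) ∈ E.rel := by
  rw [E.mem_rel_iff ht, E.act_proj t h ht]
  exact ⟨h, rfl⟩

theorem act_mem_sat (hσ : ∀ y ∈ A, E.π (σ y) = y) (hz : z ∈ A) (h : (x, z) ∈ R) :
    E.act x z (σ z) ∈ E.sat (σ '' A) :=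
  ⟨σ z, mem_image_of_mem σ hz, E.act_mem_rel (hσ z hz) h⟩

theorem act_eq_act_iff_mem_stab (hR : IsCBER R) (hσ : ∀ y ∈ A, E.π (σ y) = y)
    (hz : z ∈ A) (hz' : z' ∈ A) (h : (x, z) ∈ R) (h' : (x, z') ∈ R) :
    E.act x z (σ z) = E.act x z' (σ z') ↔ (z, z') ∈ E.stab A σ := by
  constructor
  · intro heq
    refine ⟨hz, hz', hR.trans (hR.symm h') h, ?_⟩
    calc E.act z' z (σ z) = E.act z' x (E.act x z (σ z)) :=
          (E.act_comp _ (hR.symm h') h (hσ z hz)).symm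
      _ = E.act z' x (E.act x z' (σ z')) := by rw [heq]
      _ = E.act z' z' (σ z') := E.act_comp _ (hR.symm h') h' (hσ z' hz')
      _ = σ z' := E.act_id z' _ (hσ z' hz')
  · rintro ⟨-, -, hz'z, hstab⟩
    rw [← hstab, E.act_comp _ h' hz'z (hσ z hz)]

theorem mk_mem_stab_self (hR : IsCBER R) (hσ : ∀ y ∈ A, E.π (σ y) = y) (hz : z ∈ A) :
    (z, z) ∈ E.stab A σ :=
  ⟨hz, hz, hR.refl z, E.act_id z _ (hσ z hz)⟩

theorem stab_subset_restrict (hR : IsCBER R) : E.stab A σ ⊆ Restrict R A :=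
  fun _ ⟨hu, hv, hvu, _⟩ => ⟨hR.symm hvu, hu, hv⟩

theorem eq_of_act_eq_act {P : Set E.F}
    (hPinv : ∀ ⦃x y : X⦄ (a : E.F), (x, y) ∈ R → E.π a = y → a ∈ P →
      E.act x y a ∈ P)
    (hσP : ∀ y ∈ A, σ y ∈ P) (hfd : ∀ f ∈ P, ∃! y, y ∈ A ∧ (σ y, f) ∈ E.rel)
    (hσ : ∀ y ∈ A, E.π (σ y) = y) (hz : z ∈ A) (hz' : z' ∈ A) (h : (x, z) ∈ R)
    (h' : (x, z') ∈ R) (heq : E.act x z (σ z) = E.act x z' (σ z')) : z = z' :=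
  (hfd _ (hPinv _ h (hσ z hz) (hσP z hz))).unique ⟨hz, E.act_mem_rel (hσ z hz) h⟩
    ⟨hz', heq ▸ E.act_mem_rel (hσ z' hz') h'⟩

variable {E} {E' : RFibSp X R} {f : E.F → E'.F}

theorem IsMorphism.map_act_eq_map_act_iff (hf : E.IsMorphism E' f) (hR : IsCBER R)
    (hσ : ∀ y ∈ A, E.π (σ y) = y) (hz : z ∈ A) (hz' : z' ∈ A) (h : (x, z) ∈ R)
    (h' : (x, z') ∈ R) :
    f (E.act x z (σ z)) = f (E.act x z' (σ z')) ↔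
      (z, z') ∈ E'.stab A (fun y => f (σ y)) := by
  rw [hf.2.2 _ h (hσ z hz), hf.2.2 _ h' (hσ z' hz')]
  exact E'.act_eq_act_iff_mem_stab hR (fun y hy => (hf.2.1 _).trans (hσ y hy)) hz hz' h h'

theorem IsMorphism.map_act_mem_sat (hf : E.IsMorphism E' f) (hσ : ∀ y ∈ A, E.π (σ y) = y)
    (hz : z ∈ A) (h : (x, z) ∈ R) :
    f (E.act x z (σ z)) ∈ E'.sat ((fun y => f (σ y)) '' A) := by
  rw [hf.2.2 _ h (hσ z hz)]
  exact E'.act_mem_sat (fun y hy => (hf.2.1 _).trans (hσ y hy)) hz h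

end RFibSp

namespace RGraphField

variable {X : Type u} [MeasurableSpace X] {R : Set (X × X)} (G : RGraphField X R)

theorem t_bar (a : G.Edg.F) : G.t (G.bar a) = G.o a := by
  rw [← G.o_bar, G.bar_bar]

theorem bar_injective : Function.Injective G.bar :=
  Function.Involutive.injective G.bar_bar

/-- A closed edge path `c 0, …, c (n - 1)` in the fiber over `x` without backtracking, except
possibly between its last and first edges. -/
def IsClosedReducedPath (x : X) (n : ℕ) (c : ℕ → G.Edg.F) : Prop :=
  0 < n ∧ (∀ k < n, G.Edg.π (c k) = x) ∧
    (∀ k, k + 1 < n → G.t (c k) = G.o (c (k + 1)) ∧ c (k + 1) ≠ G.bar (c k)) ∧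
    G.t (c (n - 1)) = G.o (c 0)

def Incident (v : G.V.F) (f : G.Edg.F) : Prop := G.o f = v ∨ G.t f = v

variable {G}

theorem fiberHasCircuit_of_isClosedReducedPath {x : X} :
    ∀ (n : ℕ) (c : ℕ → G.Edg.F), G.IsClosedReducedPath x n c → G.FiberHasCircuit x := by
  intro n
  induction n using Nat.strong_induction_on with
  | _ n ih =>
  rintro c ⟨hn, hπ, hstep, hclose⟩
  by_cases hwrap : c 0 = G.bar (c (n - 1))
  · -- the path backtracks at its base point: cut off the first and the last edge
    obtain ⟨n, rfl⟩ : ∃ j, n = j + 3 := by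
      refine ⟨n - 3, ?_⟩
      rcases (show n = 1 ∨ n = 2 ∨ 3 ≤ n by omega) with rfl | rfl | h
      · exact absurd hwrap.symm (G.bar_ne _)
      · exact absurd (by rw [hwrap, G.bar_bar]) (hstep 0 (by omega)).2
      · omega
    rw [show n + 3 - 1 = n + 2 by omega] at hwrap
    refine ih (n + 1) (by omega) (fun j => c (j + 1))
      ⟨by omega, fun k hk => hπ _ (by omega), fun k hk => hstep (k + 1) (by omega), ?_⟩
    have hlast : c (n + 2) = G.bar (c 0) := by rw [hwrap, G.bar_bar]
    calc G.t (c (n + 1)) = G.o (c (n + 2)) := (hstep (n + 1) (by omega)).1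
      _ = G.o (c 1) := by rw [hlast, G.o_bar, (hstep 0 (by omega)).1]
  · have hwrapped : (n - 1 + 1) % n = 0 := by rw [Nat.sub_add_cancel hn, Nat.mod_self]
    refine ⟨n, c, hn, hπ, fun k hk => ?_, fun k hk => ?_⟩
    all_goals rcases Nat.lt_or_ge (k + 1) n with h | h
    · rw [Nat.mod_eq_of_lt h]; exact (hstep k h).1
    · obtain rfl : k = n - 1 := by omega
      rw [hwrapped]; exact hclose
    · rw [Nat.mod_eq_of_lt h]; exact (hstep k h).2
    · obtain rfl : k = n - 1 := by omega
      rw [hwrapped]; exact hwrap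

/-- Reversing the edges `e k` with `p k` gives an edge path through the vertices shared by
consecutive edges. -/
theorem fiberHasCircuit_of_closed_alternating {x : X} {m : ℕ} {e : ℕ → G.Edg.F}
    (p : ℕ → Prop)
    (hm : 0 < m) (hπ : ∀ k ≤ m, G.Edg.π (e k) = x) (hclosed : e m = e 0)
    (hne : ∀ k < m, e k ≠ e (k + 1))
    (ho : ∀ k < m, p k → G.o (e k) = G.o (e (k + 1)))
    (ht : ∀ k < m, ¬ p k → G.t (e k) = G.t (e (k + 1)))
    (halt : ∀ k, k + 1 < m → (p (k + 1) ↔ ¬ p k)) : G.FiberHasCircuit x := by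
  classical
  obtain ⟨n, rfl⟩ : ∃ n, m = n + 2 := by
    refine ⟨m - 2, ?_⟩
    by_contra hm2
    obtain rfl : m = 1 := by omega
    exact hne 0 hm hclosed.symm
  set c : ℕ → G.Edg.F := fun k => if p k then G.bar (e k) else e k
  have hco : ∀ k, G.o (c k) = if p k then G.t (e k) else G.o (e k) := by
    intro k; by_cases hpk : p k <;> simp [c, hpk, G.o_bar]
  have hct : ∀ k, G.t (c k) = if p k then G.o (e k) else G.t (e k) := by
    intro k; by_cases hpk : p k <;> simp [c, hpk, G.t_bar]
  have hπc : ∀ k < n + 2, G.Edg.π (c k) = x := by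
    intro k hk; by_cases hpk : p k <;> simp [c, hpk, G.bar_mor.2.1, hπ k hk.le]
  have hstep : ∀ k, k + 1 < n + 2 →
      G.t (c k) = G.o (c (k + 1)) ∧ c (k + 1) ≠ G.bar (c k) := by
    intro k hk
    by_cases hpk : p k
    · have hpk1 : ¬ p (k + 1) := fun h => (halt k hk).1 h hpk
      rw [hct, hco, if_pos hpk, if_neg hpk1]
      simp only [c, if_pos hpk, if_neg hpk1, G.bar_bar]
      exact ⟨ho k (by omega) hpk, (hne k (by omega)).symm⟩
    · have hpk1 : p (k + 1) := (halt k hk).2 hpk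
      rw [hct, hco, if_neg hpk, if_pos hpk1]
      simp only [c, if_neg hpk, if_pos hpk1]
      exact ⟨ht k (by omega) hpk, fun h => hne k (by omega) (G.bar_injective h).symm⟩
  have ho_last := ho (n + 1) (by omega)
  have ht_last := ht (n + 1) (by omega)
  rw [hclosed] at ho_last ht_last
  by_cases hwrap : p (n + 1) ↔ p 0
  · -- `e (n + 1)`, `e 0` and `e 1` share one vertex: drop `c 0`
    refine fiberHasCircuit_of_isClosedReducedPath (n + 1) (fun j => c (j + 1))
      ⟨by omega, fun k hk => hπc _ (by omega), fun k hk => hstep (k + 1) (by omega), ?_⟩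
    simp only [Nat.add_sub_cancel, zero_add, hct, hco]
    by_cases hp0 : p 0
    · have hp1 : ¬ p 1 := fun h => (halt 0 (by omega)).1 h hp0
      simp only [hwrap.2 hp0, hp1, if_true, if_false]
      exact (ho_last (hwrap.2 hp0)).trans (ho 0 (by omega) hp0)
    · have hp1 : p 1 := (halt 0 (by omega)).2 hp0
      simp only [mt hwrap.1 hp0, hp1, if_true, if_false]
      exact (ht_last (mt hwrap.1 hp0)).trans (ht 0 (by omega) hp0)
  · refine fiberHasCircuit_of_isClosedReducedPath (n + 2) c
      ⟨by omega, hπc, hstep, ?_⟩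
    simp only [show n + 2 - 1 = n + 1 by omega, hct, hco]
    have hwrap' : ¬ p (n + 1) ↔ p 0 := not_iff.1 hwrap
    by_cases hp0 : p 0
    · have hpl : ¬ p (n + 1) := hwrap'.2 hp0
      simp only [hp0, hpl, if_true, if_false]
      exact ht_last hpl
    · have hpl : p (n + 1) := not_not.1 (mt hwrap'.1 hp0)
      simp only [hp0, hpl, if_true, if_false]
      exact ho_last hpl

variable {P : Set G.Edg.F} {A : Set X} {s : X → G.Edg.F} {x z z' : X}

theorem mem_stab_or_mem_stab_of_incident (hR : IsCBER R) (hs : ∀ y ∈ A, G.Edg.π (s y) = y)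
    (hdisj : Disjoint (G.V.sat ((fun y => G.o (s y)) '' A))
      (G.V.sat ((fun y => G.t (s y)) '' A)))
    (hz : z ∈ A) (hz' : z' ∈ A) (h : (x, z) ∈ R) (h' : (x, z') ∈ R) {v : G.V.F}
    (hv : G.Incident v (G.Edg.act x z (s z))) (hv' : G.Incident v (G.Edg.act x z' (s z'))) :
    (z, z') ∈ G.V.stab A (fun y => G.o (s y)) ∨
      (z, z') ∈ G.V.stab A (fun y => G.t (s y)) := by
  have hosat := fun {y} hy hxy => G.o_mor.map_act_mem_sat (x := x) (z := y) hs hy hxy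
  have htsat := fun {y} hy hxy => G.t_mor.map_act_mem_sat (x := x) (z := y) hs hy hxy
  rcases hv with rfl | rfl <;> rcases hv' with hv' | hv'
  · exact Or.inl ((G.o_mor.map_act_eq_map_act_iff hR hs hz hz' h h').1 hv'.symm)
  · exact absurd (hv' ▸ htsat hz' h') (disjoint_left.1 hdisj (hosat hz h))
  · exact absurd (hv' ▸ hosat hz' h') (disjoint_right.1 hdisj (htsat hz h))
  · exact Or.inr ((G.t_mor.map_act_eq_map_act_iff hR hs hz hz' h h').1 hv'.symm)

theorem exists_incident_act_of_edge (hP : G.IsOrientation P) (hs : ∀ y ∈ A, G.Edg.π (s y) = y)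
    (hfd : ∀ e ∈ P, ∃! y, y ∈ A ∧ (s y, e) ∈ G.Edg.rel) (f : G.Edg.F) :
    ∃ z ∈ A, (G.Edg.π f, z) ∈ R ∧ G.Incident (G.o f) (G.Edg.act (G.Edg.π f) z (s z)) ∧
      G.Incident (G.t f) (G.Edg.act (G.Edg.π f) z (s z)) := by
  have htranslate : ∀ e ∈ P,
      ∃ z ∈ A, (G.Edg.π e, z) ∈ R ∧ G.Edg.act (G.Edg.π e) z (s z) = e := by
    intro e he
    obtain ⟨z, ⟨hz, hrel⟩, -⟩ := hfd e he
    exact ⟨z, hz, (G.Edg.mem_rel_iff (hs z hz)).1 hrel⟩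
  by_cases hf : f ∈ P
  · obtain ⟨z, hz, h, he⟩ := htranslate f hf
    exact ⟨z, hz, h, Or.inl (congrArg G.o he), Or.inr (congrArg G.t he)⟩
  · have hbar : G.bar f ∈ P := not_not.1 (mt (hP.2.1 f).2 hf)
    obtain ⟨z, hz, h, he⟩ := htranslate _ hbar
    rw [G.bar_mor.2.1] at h he
    exact ⟨z, hz, h, Or.inr (by rw [he, t_bar]), Or.inl (by rw [he, o_bar])⟩

theorem eqvGen_stab_of_reflTransGen_adj (hR : IsCBER R) (hP : G.IsOrientation P)
    (hs : ∀ y ∈ A, G.Edg.π (s y) = y)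
    (hfd : ∀ e ∈ P, ∃! y, y ∈ A ∧ (s y, e) ∈ G.Edg.rel)
    (hdisj : Disjoint (G.V.sat ((fun y => G.o (s y)) '' A))
      (G.V.sat ((fun y => G.t (s y)) '' A)))
    {v w : G.V.F} (hvw : Relation.ReflTransGen (G.Adj x) v w)
    (hz : z ∈ A) (h : (x, z) ∈ R) (hv : G.Incident v (G.Edg.act x z (s z)))
    (hz' : z' ∈ A) (h' : (x, z') ∈ R) (hw : G.Incident w (G.Edg.act x z' (s z'))) :
    Relation.EqvGen (fun a b => (a, b) ∈ G.V.stab A (fun y => G.o (s y)) ∨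
      (a, b) ∈ G.V.stab A (fun y => G.t (s y))) z z' := by
  induction hvw generalizing z' with
  | refl => exact .rel _ _ (mem_stab_or_mem_stab_of_incident hR hs hdisj hz hz' h h' hv hw)
  | tail _ hadj ih =>
    obtain ⟨f, rfl, rfl, rfl⟩ := hadj
    obtain ⟨z₀, hz₀, h₀, ho, ht⟩ := exists_incident_act_of_edge hP hs hfd f
    exact .trans _ _ _ (ih hz₀ h₀ ho)
      (.rel _ _ (mem_stab_or_mem_stab_of_incident hR hs hdisj hz₀ hz' h₀ h' ht hw))

theorem eqvGen_stab_of_mem_restrict (hR : IsCBER R) (hArb : G.IsArboretum)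
    (hP : G.IsOrientation P) (hs : ∀ y ∈ A, G.Edg.π (s y) = y)
    (hfd : ∀ e ∈ P, ∃! y, y ∈ A ∧ (s y, e) ∈ G.Edg.rel)
    (hdisj : Disjoint (G.V.sat ((fun y => G.o (s y)) '' A))
      (G.V.sat ((fun y => G.t (s y)) '' A)))
    {u v : X} (huv : (u, v) ∈ Restrict R A) :
    Relation.EqvGen (fun a b => (a, b) ∈ G.V.stab A (fun y => G.o (s y)) ∨
      (a, b) ∈ G.V.stab A (fun y => G.t (s y))) u v := by
  obtain ⟨h, hu, hv⟩ := huv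
  have hsu : G.Edg.act u u (s u) = s u := G.Edg.act_id u _ (hs u hu)
  have hconn := (hArb u).1 (G.o (s u)) (G.o (G.Edg.act u v (s v)))
    ((G.o_mor.2.1 _).trans (hs u hu)) ((G.o_mor.2.1 _).trans (G.Edg.act_proj _ h (hs v hv)))
  exact eqvGen_stab_of_reflTransGen_adj hR hP hs hfd hdisj hconn hu (hR.refl u)
    (Or.inl (by rw [hsu])) hv h (Or.inl rfl)

/-- Translating a reduced word `x 0, …, x m` of the stabilizers to the fiber over `x 0` gives
edges `e k` of which consecutive ones share their origin or terminal vertex alternately. -/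
theorem last_ne_first_of_reduced2_stab (hR : IsCBER R) (hArb : G.IsArboretum)
    (hP : G.IsOrientation P) (hs : ∀ y ∈ A, G.Edg.π (s y) = y) (hsP : ∀ y ∈ A, s y ∈ P)
    (hfd : ∀ e ∈ P, ∃! y, y ∈ A ∧ (s y, e) ∈ G.Edg.rel) {m : ℕ} {x : ℕ → X}
    (hred : Reduced2 (G.V.stab A fun y => G.o (s y)) (G.V.stab A fun y => G.t (s y)) m x) :
    x m ≠ x 0 := by
  intro hclose
  have hne : ∀ k < m, x k ≠ x (k + 1) := fun k hk => hred.ne_succ (fun a _ hab => by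
    have ha : a ∈ A := hab.elim (·.1) (·.1)
    exact ⟨G.V.mk_mem_stab_self hR (fun y hy => (G.o_mor.2.1 _).trans (hs y hy)) ha,
      G.V.mk_mem_stab_self hR (fun y hy => (G.t_mor.2.1 _).trans (hs y hy)) ha⟩) hk
  obtain ⟨hm, hpairs, ho_alt, ht_alt, -⟩ := hred
  have hpairR : ∀ k < m, (x k, x (k + 1)) ∈ Restrict R A := fun k hk =>
    (hpairs k hk).elim (G.V.stab_subset_restrict hR ·) (G.V.stab_subset_restrict hR ·)
  have hbase : ∀ k ≤ m, x k ∈ A ∧ (x 0, x k) ∈ R := by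
    intro k hk
    induction k with
    | zero => exact ⟨(hpairR 0 hm).2.1, hR.refl _⟩
    | succ k ih => exact ⟨(hpairR k hk).2.2, hR.trans (ih (by omega)).2 (hpairR k hk).1⟩
  set e : ℕ → G.Edg.F := fun k => G.Edg.act (x 0) (x k) (s (x k))
  have hmap_iff : ∀ {f : G.Edg.F → G.V.F}, G.Edg.IsMorphism G.V f → ∀ k < m,
      (f (e k) = f (e (k + 1)) ↔ (x k, x (k + 1)) ∈ G.V.stab A fun y => f (s y)) :=
    fun hf k hk => hf.map_act_eq_map_act_iff hR hs (hbase k hk.le).1 (hbase (k + 1) hk).1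
      (hbase k hk.le).2 (hbase (k + 1) hk).2
  have halt : ∀ k, k + 1 < m → ((x (k + 1), x (k + 2)) ∈ G.V.stab A (fun y => G.o (s y)) ↔
      (x k, x (k + 1)) ∉ G.V.stab A fun y => G.o (s y)) := fun k hk =>
    ⟨fun h1 h0 => ho_alt k hk ⟨h0, h1⟩, fun h0 => (hpairs (k + 1) hk).resolve_right
      fun h1 => ht_alt k hk ⟨(hpairs k (by omega)).resolve_left h0, h1⟩⟩
  refine (hArb (x 0)).2 (fiberHasCircuit_of_closed_alternating
    (fun k => (x k, x (k + 1)) ∈ G.V.stab A fun y => G.o (s y)) (by omega)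
    (fun k hk => G.Edg.act_proj _ (hbase k hk).2 (hs _ (hbase k hk).1))
    (by simp only [hclose]) (fun k hk heq => hne k hk ?_)
    (fun k hk hp => (hmap_iff G.o_mor k hk).2 hp)
    (fun k hk hp => (hmap_iff G.t_mor k hk).2 ((hpairs k hk).resolve_left hp)) halt)
  exact G.Edg.eq_of_act_eq_act hP.2.2 hsP hfd hs (hbase k hk.le).1 (hbase (k + 1) hk).1
    (hbase k hk.le).2 (hbase (k + 1) hk).2 heq

end RGraphField

theorem freeProduct_restriction_of_edge_fundamental_domain_general
    {X : Type u} [MeasurableSpace X]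
    {R : Set (X × X)} (hR : IsCBER R)
    (G : RGraphField X R) (hArb : G.IsArboretum)
    (P : Set G.Edg.F) (hP : G.IsOrientation P)
    (A : Set X) (s : X → G.Edg.F) (hs : G.Edg.IsPartialSection A s)
    (hsP : ∀ x ∈ A, s x ∈ P)
    -- `s(A)` is a fundamental domain of the induced relation on `A^{1+}` :
    (hfd : ∀ e ∈ P, ∃! x, x ∈ A ∧ (s x, e) ∈ G.Edg.rel)
    -- the saturations of `o (d (A))` and `t (d (A))` partition the vertex space :
    (hdisj : Disjoint (G.V.sat ((fun x => G.o (s x)) '' A))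
      (G.V.sat ((fun x => G.t (s x)) '' A))) :
    IsFreeProduct2 (Restrict R A) (G.V.stab A fun x => G.o (s x))
      (G.V.stab A fun x => G.t (s x)) :=
  ⟨G.V.stab_subset_restrict hR, G.V.stab_subset_restrict hR,
    fun _ hp => RGraphField.eqvGen_stab_of_mem_restrict hR hArb hP hs.2.2 hfd hdisj hp,
    fun _ _ hred => RGraphField.last_ne_first_of_reduced2_stab hR hArb hP hs.2.2 hsP hfd hred⟩

/-- If the oriented edge space of an `R`-arboretum admits a partial section `s` on `A` whose
image is a fundamental domain of the induced relation, and the saturations of the origin and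
terminal vertex sections partition the vertex space, then `R|_A` is the free product of the
stabilizers of the two vertex sections. -/
theorem freeProduct_restriction_of_edge_fundamental_domain
    {X : Type u} [MeasurableSpace X] [StandardBorelSpace X]
    {R : Set (X × X)} (hR : IsCBER R)
    (G : RGraphField X R) (hArb : G.IsArboretum)
    (P : Set G.Edg.F) (hP : G.IsOrientation P)
    (A : Set X) (s : X → G.Edg.F) (hs : G.Edg.IsPartialSection A s)
    (hsP : ∀ x ∈ A, s x ∈ P)
    -- `s(A)` is a fundamental domain of the induced relation on `A^{1+}` :
    (hfd : ∀ e ∈ P, ∃! x, x ∈ A ∧ (s x, e) ∈ G.Edg.rel)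
    -- the saturations of `o (d (A))` and `t (d (A))` partition the vertex space :
    (hdisj : Disjoint (G.V.sat ((fun x => G.o (s x)) '' A))
      (G.V.sat ((fun x => G.t (s x)) '' A)))
    (hcover : G.V.sat ((fun x => G.o (s x)) '' A) ∪
      G.V.sat ((fun x => G.t (s x)) '' A) = Set.univ) :
    IsFreeProduct2 (Restrict R A) (G.V.stab A fun x => G.o (s x))
      (G.V.stab A fun x => G.t (s x)) :=
  freeProduct_restriction_of_edge_fundamental_domain_general hR G hArb P hP A s hs hsP hfd hdisj
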